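/- Let G be a connected non-bipartite graph on n vertices and let ℓ = (1/2,…,1/2) ∈ ℝⁿ. Then ℝ₊B ⊆ {w ∈ ℝ^{n+1} : w·(−ℓ,1) ≥ 0}, and the hyperplane {w : w·(−ℓ,1) = 0} contains n linearly independent vectors from {(v₁,1),…,(v_q,1)}; i.e., {w : w·(−ℓ,1)=0} ∩ ℝ₊B is a facet of the (n+1)-dimensional cone ℝ₊B. -/

import Mathlib

/-!
The halfspace bound is checked on the generators: the linear form `w ↦ 2 w·(−ℓ, 1)` is positive
on `(eᵢ, 1)` and on `e_{n+1}`, and vanishes on every `(vₖ, 1)`. For the facet, a walk from `a`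
to `b` shows `e_a − (−1)^length e_b` lies in the span of the edge vectors, so an odd closed walk
gives `2 e_v` and connectivity then gives every `e_u`. The edge vectors thus span `ℝⁿ`, and any
basis extracted from them lifts, by appending the coordinate `1`, to `n` independent vectors on
the hyperplane.
-/

open NNReal

/-- The set `B = {(e₁,1),…,(e_n,1)} ∪ {(v,1) : v edge characteristic vector} ∪ {e_{n+1}}`
inside `ℝⁿ × ℝ`. -/
def graphGenSetR (n : ℕ) (G : SimpleGraph (Fin n)) : Set ((Fin n → ℝ) × ℝ) :=
  {p | ∃ i : Fin n, p = (Pi.single i 1, 1)} ∪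
  {p | ∃ a b : Fin n, G.Adj a b ∧ p = (Pi.single a 1 + Pi.single b 1, 1)} ∪
  {((0 : Fin n → ℝ), 1)}

theorem nonneg_of_mem_span_nnreal {M : Type*} [AddCommGroup M] [Module ℝ M] {s : Set M}
    (φ : M →ₗ[ℝ] ℝ) (hs : ∀ x ∈ s, 0 ≤ φ x) {x : M} (hx : x ∈ Submodule.span ℝ≥0 s) :
    0 ≤ φ x := by
  induction hx using Submodule.span_induction with
  | mem x hx => exact hs x hx
  | zero => simp
  | add x y _ _ hx hy => rw [map_add]; exact add_nonneg hx hy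
  | smul c x _ hx => rw [NNReal.smul_def, map_smul, smul_eq_mul]; exact mul_nonneg c.2 hx

theorem Module.Basis.exists_linearIndependent_forall_mem {ι K V : Type*} [DivisionRing K]
    [AddCommGroup V] [Module K V] (b : Module.Basis ι K V) {s : Set V}
    (hs : ⊤ ≤ Submodule.span K s) : ∃ f : ι → V, LinearIndependent K f ∧ ∀ i, f i ∈ s := by
  let b' := Module.Basis.ofSpan hs
  refine ⟨b'.reindex (b.indexEquiv b').symm, Module.Basis.linearIndependent _, fun i => ?_⟩
  rw [Module.Basis.reindex_apply]
  exact Module.Basis.ofSpan_subset hs ⟨_, rfl⟩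

namespace SimpleGraph

variable {V : Type*} [DecidableEq V] (R : Type*) [CommRing R] (G : SimpleGraph V)

def edgeVectors : Set (V → R) :=
  {w | ∃ a b, G.Adj a b ∧ w = Pi.single a 1 + Pi.single b 1}

variable {R G}

theorem Walk.single_sub_neg_one_pow_smul_single_mem_span {a b : V} (p : G.Walk a b) :
    Pi.single a 1 - (-1 : R) ^ p.length • Pi.single b 1 ∈
      Submodule.span R (G.edgeVectors R) := by
  induction p with
  | nil => simp
  | @cons a x b h p ih =>
    have hedge : Pi.single a 1 + Pi.single x 1 ∈ Submodule.span R (G.edgeVectors R) :=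
      Submodule.subset_span ⟨a, x, h, rfl⟩
    convert Submodule.sub_mem _ hedge ih using 1
    rw [Walk.length_cons, pow_succ]
    module

theorem span_edgeVectors_eq_top {K : Type*} [Field K] [NeZero (2 : K)] [Finite V]
    (hconn : G.Connected) {v : V} (c : G.Walk v v) (hc : Odd c.length) :
    Submodule.span K (G.edgeVectors K) = ⊤ := by
  set S := Submodule.span K (G.edgeVectors K)
  have hv : Pi.single v 1 ∈ S := by
    have h2 : (2 : K) • Pi.single v 1 ∈ S := by
      convert c.single_sub_neg_one_pow_smul_single_mem_span (R := K) using 1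
      rw [hc.neg_one_pow]
      module
    exact (S.smul_mem_iff two_ne_zero).1 h2
  have hu (u : V) : Pi.single u 1 ∈ S := by
    obtain ⟨p⟩ := hconn.preconnected u v
    convert S.add_mem p.single_sub_neg_one_pow_smul_single_mem_span
      (S.smul_mem ((-1 : K) ^ p.length) hv) using 1
    module
  rw [eq_top_iff, ← (Pi.basisFun K V).span_eq, Submodule.span_le]
  rintro _ ⟨u, rfl⟩
  simpa using hu u

end SimpleGraph

/-- `w ↦ 2 w·(−ℓ, 1)` with `ℓ = (1/2,…,1/2)`. -/
def facetForm (ι : Type*) [Fintype ι] : ((ι → ℝ) × ℝ) →ₗ[ℝ] ℝ :=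
  LinearMap.coprod (-∑ i, LinearMap.proj i) ((2 : ℝ) • LinearMap.id)

theorem facetForm_apply {ι : Type*} [Fintype ι] (w : (ι → ℝ) × ℝ) :
    facetForm ι w = 2 * w.2 - ∑ i, w.1 i := by
  simp only [facetForm, LinearMap.coprod_apply, LinearMap.neg_apply, LinearMap.coe_sum,
    LinearMap.coe_proj, Finset.sum_apply, Function.eval, LinearMap.smul_apply, LinearMap.id_coe,
    id_eq, smul_eq_mul]
  ring

theorem facetForm_single_add_single {ι : Type*} [Fintype ι] [DecidableEq ι] (a b : ι) :
    facetForm ι (Pi.single a 1 + Pi.single b 1, 1) = 0 := by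
  norm_num [facetForm_apply, Finset.sum_add_distrib]

theorem facetForm_nonneg_of_mem_graphGenSetR {n : ℕ} {G : SimpleGraph (Fin n)} :
    ∀ x ∈ graphGenSetR n G, 0 ≤ facetForm (Fin n) x := by
  rintro _ ((⟨i, rfl⟩ | ⟨a, b, -, rfl⟩) | rfl)
  · simp [facetForm_apply]
  · exact (facetForm_single_add_single a b).ge
  · simp [facetForm_apply]

/-- For a connected non-bipartite graph `G` (one containing an odd cycle) and
`ℓ = (1/2,…,1/2)`, the cone `ℝ₊B` lies in the halfspace `{w : w·(−ℓ,1) ≥ 0}`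
(i.e. `Σᵢ w̃ᵢ ≤ 2b`), and the hyperplane `{w : w·(−ℓ,1) = 0}` contains `n` linearly
independent vectors among `(v₁,1),…,(v_q,1)`: the intersection with `ℝ₊B` is a facet. -/
theorem nonBipartite_gives_facet {n : ℕ} (G : SimpleGraph (Fin n)) (hconn : G.Connected)
    (hodd : ∃ (v : Fin n) (c : G.Walk v v), c.IsCycle ∧ Odd c.length) :
    (∀ w ∈ Submodule.span ℝ≥0 (graphGenSetR n G), ∑ i : Fin n, w.1 i ≤ 2 * w.2) ∧
      ∃ f : Fin n → (Fin n → ℝ) × ℝ, LinearIndependent ℝ f ∧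
        ∀ j : Fin n,
          (∃ a b : Fin n, G.Adj a b ∧ f j = (Pi.single a 1 + Pi.single b 1, 1))
            ∧ ∑ i : Fin n, (f j).1 i = 2 * (f j).2 := by
  obtain ⟨v, c, -, hc⟩ := hodd
  refine ⟨fun w hw => ?_, ?_⟩
  · have h := nonneg_of_mem_span_nnreal _ facetForm_nonneg_of_mem_graphGenSetR hw
    rw [facetForm_apply] at h
    linarith
  · obtain ⟨f, hf, hf_edge⟩ := (Pi.basisFun ℝ (Fin n)).exists_linearIndependent_forall_mem
      (G.span_edgeVectors_eq_top hconn c hc).ge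
    refine ⟨fun j => (f j, 1), hf.of_comp (LinearMap.fst ℝ _ ℝ), fun j => ?_⟩
    obtain ⟨a, b, hab, hfj⟩ := hf_edge j
    refine ⟨⟨a, b, hab, Prod.ext hfj rfl⟩, ?_⟩
    have h := facetForm_single_add_single a b
    rw [facetForm_apply, ← hfj] at h
    exact (sub_eq_zero.1 h).symm
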